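/- arXiv:1503.09170 — 3 statements merged into one kernel-verified Lean document; each statement's English description precedes it below -/
import Mathlib

section
/- Let s have the annulus path-loss cdf F_s (with exponent α and inner radius δ), let f be an independent nonnegative random variable with cdf P_f, and set h = s·f. Then for x ≥ δ^{-α} (sufficiently large; in particular wherever the boundary terms vanish), the cdf of h satisfies P_h(x) = (1/(x^{2/α}(1-δ²))) ∫_{x^{2/α} δ²}^{x^{2/α}} P_f(y^{α/2}) dy. -/
open MeasureTheory

/-- For the product channel gain `h = s·f`, with `s` having the
annulus path-loss cdf `F_s` and `f` an independent nonnegative variable with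
cdf `P_f`, the cdf `P_h(x) = ∫ F_s(x/y) dP_f(y)` satisfies, for `x ≥ δ^{-α}`,
`P_h(x) = (1/(x^{2/α}(1-δ²))) ∫_{x^{2/α}δ²}^{x^{2/α}} P_f(y^{α/2}) dy`. -/
theorem product_channel_cdf (δ α : ℝ) (hδ0 : 0 < δ) (hδ1 : δ < 1) (hα : 0 < α)
    (Fs : ℝ → ℝ)
    (hFs_low : ∀ x : ℝ, x < 1 → Fs x = 0)
    (hFs_mid : ∀ x : ℝ, 1 ≤ x → x < δ ^ (-α) →
      Fs x = 1 - (x ^ (-2 / α) - δ ^ (2 : ℕ)) / (1 - δ ^ (2 : ℕ)))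
    (hFs_high : ∀ x : ℝ, δ ^ (-α) ≤ x → Fs x = 1)
    (ν : Measure ℝ) [IsProbabilityMeasure ν] (hν : ν (Set.Iio 0) = 0)
    (Pf : ℝ → ℝ) (hPf : ∀ y : ℝ, Pf y = (ν (Set.Iic y)).toReal)
    (hPf_cont : Continuous Pf)
    (Ph : ℝ → ℝ) (hPh : ∀ x : ℝ, Ph x = ∫ y, Fs (x / y) ∂ν) :
    ∀ x : ℝ, δ ^ (-α) ≤ x →
      Ph x = 1 / (x ^ (2 / α) * (1 - δ ^ (2 : ℕ)))
        * ∫ y in (x ^ (2 / α) * δ ^ (2 : ℕ))..(x ^ (2 / α)), Pf (y ^ (α / 2)) := by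
  intro x hx
  -- basic facts
  have hδα1 : (1:ℝ) < δ ^ (-α) := by
    rw [Real.one_lt_rpow_iff_of_pos hδ0]
    exact Or.inr ⟨hδ1, by linarith⟩
  have hx1 : (1:ℝ) < x := lt_of_lt_of_le hδα1 hx
  have hx0 : (0:ℝ) < x := by linarith
  have hδ2 : δ ^ (2:ℕ) < 1 := pow_lt_one₀ hδ0.le hδ1 (by norm_num)
  set c : ℝ := 1 - δ ^ (2:ℕ) with hc_def
  have hc : 0 < c := by simp only [hc_def]; linarith
  set X : ℝ := x ^ (2/α) with hX_def
  have hX : 0 < X := Real.rpow_pos_of_pos hx0 _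
  set a : ℝ := X * δ ^ (2:ℕ) with ha_def
  have ha0 : 0 < a := mul_pos hX (pow_pos hδ0 2)
  have haX : a < X := by
    have : X * δ ^ (2:ℕ) < X * 1 := by
      exact mul_lt_mul_of_pos_left hδ2 hX
    simpa using this
  -- rpow identities
  have hδ2R : δ ^ (2:ℕ) = δ ^ (2:ℝ) := by
    rw [← Real.rpow_natCast δ 2]; norm_num
  have hXx : X ^ (α/2) = x := by
    rw [hX_def, ← Real.rpow_mul hx0.le]
    rw [show (2/α) * (α/2) = 1 by field_simp]
    exact Real.rpow_one x
  have hδαinv : δ ^ (-α) = (δ ^ α)⁻¹ := Real.rpow_neg hδ0.le _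
  have hδαpos : 0 < δ ^ α := Real.rpow_pos_of_pos hδ0 _
  have hxδα : 0 < x * δ ^ α := mul_pos hx0 hδαpos
  have hax : (x * δ ^ α) ^ (2/α) = a := by
    rw [Real.mul_rpow hx0.le hδαpos.le, ← Real.rpow_mul hδ0.le]
    rw [show α * (2/α) = 2 by field_simp]
    rw [ha_def, hδ2R]
  -- ν has no mass on (-∞, 0]
  have hν0 : ν (Set.Iic 0) = 0 := by
    have hPfneg : ∀ y : ℝ, y < 0 → Pf y = 0 := by
      intro y hy
      have h1 : ν (Set.Iic y) = 0 :=
        measure_mono_null (fun z hz => lt_of_le_of_lt hz hy) hν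
      rw [hPf, h1]; simp
    have h0 : Pf 0 = 0 := by
      have ht : Filter.Tendsto Pf (nhdsWithin 0 (Set.Iio 0)) (nhds (Pf 0)) :=
        (hPf_cont.tendsto 0).mono_left nhdsWithin_le_nhds
      have ht0 : Filter.Tendsto Pf (nhdsWithin 0 (Set.Iio 0)) (nhds 0) := by
        apply Filter.Tendsto.congr' _ tendsto_const_nhds
        filter_upwards [self_mem_nhdsWithin] with y hy
        exact (hPfneg y hy).symm
      exact tendsto_nhds_unique ht ht0
    have := hPf 0
    rw [h0] at this
    have hfin : ν (Set.Iic 0) ≠ ⊤ := measure_ne_top ν _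
    rcases ENNReal.toReal_eq_zero_iff (ν (Set.Iic 0)) |>.mp this.symm with h | h
    · exact h
    · exact absurd h hfin
  -- the geometric slice function
  set μ : Measure ℝ := volume.restrict (Set.Ioc a X) with hμ_def
  set T : Set (ℝ × ℝ) := {p : ℝ × ℝ | p.2 ≤ p.1 ^ (α/2)} with hT_def
  have hTm : MeasurableSet T := by
    apply measurableSet_le measurable_snd
    exact (continuous_fst.rpow_const
      (fun _ => Or.inr (by positivity : (0:ℝ) ≤ α/2))).measurable
  -- pointwise computation for y > 0
  have key : ∀ y : ℝ, 0 < y →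
      Fs (x / y) = 1 / (X * c) * (μ {u | y ≤ u ^ (α/2)}).toReal := by
    intro y hy
    have hu0 : (0:ℝ) < y ^ (2/α) := Real.rpow_pos_of_pos hy _
    set u0 : ℝ := y ^ (2/α) with hu0_def
    have hu0y : u0 ^ (α/2) = y := by
      rw [hu0_def, ← Real.rpow_mul hy.le]
      rw [show (2/α) * (α/2) = 1 by field_simp]
      exact Real.rpow_one y
    have hiff : ∀ u : ℝ, 0 < u → (y ≤ u ^ (α/2) ↔ u0 ≤ u) := by
      intro u hu
      constructor
      · intro h
        have := Real.rpow_le_rpow hy.le h (by positivity : (0:ℝ) ≤ 2/α)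
        rwa [← Real.rpow_mul hu.le, show (α/2) * (2/α) = 1 by field_simp,
          Real.rpow_one] at this
      · intro h
        have := Real.rpow_le_rpow hu0.le h (by positivity : (0:ℝ) ≤ α/2)
        rwa [hu0y] at this
    have hmset : MeasurableSet {u : ℝ | y ≤ u ^ (α/2)} :=
      measurableSet_le measurable_const
        (continuous_id.rpow_const (fun _ => Or.inr (by positivity : (0:ℝ) ≤ α/2))).measurable
    rw [hμ_def, Measure.restrict_apply hmset]
    rcases le_or_gt y (x * δ ^ α) with h1 | h1
    · -- y ≤ x δ^α : Fs = 1
      have hu0a : u0 ≤ a := by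
        rw [← hax]
        exact Real.rpow_le_rpow hy.le h1 (by positivity)
      have hset : {u : ℝ | y ≤ u ^ (α/2)} ∩ Set.Ioc a X = Set.Ioc a X := by
        apply Set.inter_eq_self_of_subset_right
        intro u hu
        have hua : a < u := hu.1
        exact (hiff u (lt_trans ha0 hua)).mpr (le_of_lt (lt_of_le_of_lt hu0a hua))
      rw [hset, Real.volume_Ioc, ENNReal.toReal_ofReal (by linarith)]
      have hFs1 : Fs (x / y) = 1 := by
        apply hFs_high
        rw [hδαinv, le_div_iff₀ hy]
        have h3 : (δ ^ α)⁻¹ * (x * δ ^ α) = x := by field_simp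
        have h4 := mul_le_mul_of_nonneg_left h1 (inv_nonneg.mpr hδαpos.le)
        linarith
      rw [hFs1]
      have hXa : X - a = X * c := by rw [ha_def, hc_def]; ring
      rw [hXa]
      field_simp
    · rcases le_or_gt y x with h2 | h2
      · -- x δ^α < y ≤ x : middle regime
        have hu0a : a < u0 := by
          rw [← hax]
          exact Real.rpow_lt_rpow hxδα.le h1 (by positivity)
        have hu0X : u0 ≤ X := by
          rw [hX_def]
          exact Real.rpow_le_rpow hy.le h2 (by positivity)
        have hset : {u : ℝ | y ≤ u ^ (α/2)} ∩ Set.Ioc a X = Set.Icc u0 X := by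
          ext u
          simp only [Set.mem_inter_iff, Set.mem_setOf_eq, Set.mem_Ioc, Set.mem_Icc]
          constructor
          · rintro ⟨h3, h4, h5⟩
            exact ⟨(hiff u (lt_trans ha0 h4)).mp h3, h5⟩
          · rintro ⟨h3, h4⟩
            have hupos : 0 < u := lt_of_lt_of_le hu0 h3
            exact ⟨(hiff u hupos).mpr h3, lt_of_lt_of_le hu0a h3, h4⟩
        rw [hset, Real.volume_Icc, ENNReal.toReal_ofReal (by linarith)]
        have hxy1 : 1 ≤ x / y := (le_div_iff₀ hy).mpr (by linarith)
        have hxy2 : x / y < δ ^ (-α) := by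
          rw [hδαinv, div_lt_iff₀ hy]
          have h3 : (δ ^ α)⁻¹ * (x * δ ^ α) = x := by field_simp
          have h4 := mul_lt_mul_of_pos_left h1 (inv_pos.mpr hδαpos)
          linarith
        rw [hFs_mid _ hxy1 hxy2]
        have hrw : (x / y) ^ (-2/α) = u0 / X := by
          rw [show (-2:ℝ)/α = -(2/α) by ring, Real.rpow_neg (by positivity),
            ← Real.inv_rpow (by positivity), inv_div, Real.div_rpow hy.le hx0.le]
        rw [hrw, hc_def]
        have hXne : X ≠ 0 := ne_of_gt hX
        have hcne : c ≠ 0 := ne_of_gt hc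
        have hcne' : (1:ℝ) - δ ^ (2:ℕ) ≠ 0 := ne_of_gt (by linarith)
        field_simp
        ring
      · -- y > x : Fs = 0
        have hu0X : X < u0 := by
          rw [hX_def]
          exact Real.rpow_lt_rpow hx0.le h2 (by positivity)
        have hset : {u : ℝ | y ≤ u ^ (α/2)} ∩ Set.Ioc a X = ∅ := by
          ext u
          simp only [Set.mem_inter_iff, Set.mem_setOf_eq, Set.mem_Ioc,
            Set.mem_empty_iff_false, iff_false, not_and]
          rintro h3 h4
          intro h5
          have hupos : 0 < u := lt_trans ha0 h4
          have := (hiff u hupos).mp h3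
          linarith
        rw [hset]
        have : Fs (x / y) = 0 := hFs_low _ ((div_lt_one hy).mpr h2)
        simp [this]
  -- a.e. equality
  have hae : (fun y => Fs (x / y)) =ᵐ[ν]
      (fun y => 1 / (X * c) * (μ {u | y ≤ u ^ (α/2)}).toReal) := by
    rw [Filter.eventuallyEq_iff_exists_mem]
    refine ⟨Set.Ioi 0, ?_, fun y hy => key y hy⟩
    rw [mem_ae_iff]
    have : (Set.Ioi (0:ℝ))ᶜ = Set.Iic 0 := by ext z; simp
    rw [this]; exact hν0
  -- Fubini-type double counting
  have hslice1 : ∀ u : ℝ, Prod.mk u ⁻¹' T = Set.Iic (u ^ (α/2)) := by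
    intro u; ext z; simp [hT_def]
  have hslice2 : ∀ y : ℝ, (fun u => (u, y)) ⁻¹' T = {u | y ≤ u ^ (α/2)} := by
    intro y; ext u; simp [hT_def]
  have hμfin : IsFiniteMeasure μ := by
    rw [hμ_def]
    exact ⟨by rw [Measure.restrict_apply_univ, Real.volume_Ioc]; exact ENNReal.ofReal_lt_top⟩
  have hfub : ∫⁻ y, μ {u | y ≤ u ^ (α/2)} ∂ν
      = ∫⁻ u, ν (Set.Iic (u ^ (α/2))) ∂μ := by
    have h1 := Measure.prod_apply (μ := μ) (ν := ν) hTm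
    have h2 := Measure.prod_apply_symm (μ := μ) (ν := ν) hTm
    simp_rw [hslice1] at h1
    simp_rw [hslice2] at h2
    rw [← h1, ← h2]
  -- convert to Bochner integrals
  have hmeas_y : Measurable fun y => μ {u | y ≤ u ^ (α/2)} := by
    have := measurable_measure_prodMk_right (μ := μ) hTm
    simpa [hslice2] using this
  have hmeas_u : Measurable fun u => ν (Set.Iic (u ^ (α/2))) := by
    have := measurable_measure_prodMk_left (ν := ν) hTm
    simpa [hslice1] using this
  have hint1 : ∫ y, (μ {u | y ≤ u ^ (α/2)}).toReal ∂ν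
      = (∫⁻ y, μ {u | y ≤ u ^ (α/2)} ∂ν).toReal := by
    apply integral_toReal hmeas_y.aemeasurable
    filter_upwards with y
    exact lt_of_le_of_lt (measure_mono (Set.subset_univ _))
      (hμfin.measure_univ_lt_top)
  have hint2 : ∫ u, (ν (Set.Iic (u ^ (α/2)))).toReal ∂μ
      = (∫⁻ u, ν (Set.Iic (u ^ (α/2))) ∂μ).toReal := by
    apply integral_toReal hmeas_u.aemeasurable
    filter_upwards with u
    exact measure_lt_top ν _
  -- assemble
  rw [hPh, integral_congr_ae hae, integral_const_mul, hint1, hfub, ← hint2]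
  congr 1
  rw [intervalIntegral.integral_of_le (le_of_lt haX)]
  rw [hμ_def]
  apply setIntegral_congr_fun measurableSet_Ioc
  intro u _
  exact (hPf _).symm
end

section
/- The closed-form product-channel cdf G(x) = 1 + (e^{-x} - e^{-xδ²})/(x(1-δ²)) for x > 0 (with G(0) := 0) satisfies 0 ≤ G(x) ≤ 1 for all x ≥ 0, G is monotone nondecreasing on (0,∞), and G(x) → 1 as x → ∞. -/
open Filter
open Real

lemma intRep (x c : ℝ) (hx : x ≠ 0) :
    ∫ t in c..1, Real.exp (-(x * t)) = (Real.exp (-(x * c)) - Real.exp (-x)) / x := by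
  have h1 := intervalIntegral.integral_comp_mul_left (a := c) (b := 1) (fun u => Real.exp (-u)) hx
  rw [h1]
  rw [show (∫ u in x*c..x*1, Real.exp (-u)) = ∫ u in -(x*1)..-(x*c), Real.exp u from
    intervalIntegral.integral_comp_neg (fun u => Real.exp u)]
  rw [integral_exp]
  simp only [smul_eq_mul, mul_one]
  ring

/-- The closed-form product-channel cdf
`G(x) = 1 + (e^{-x} - e^{-xδ²})/(x(1-δ²))` for `x > 0`, with `G(0) = 0`,
takes values in `[0,1]`, is monotone nondecreasing on `(0,∞)`, and tends to 1
at infinity. -/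
theorem product_channel_cdf_properties (δ : ℝ) (hδ0 : 0 < δ) (hδ1 : δ < 1)
    (G : ℝ → ℝ) (hG0 : G 0 = 0)
    (hG : ∀ x : ℝ, 0 < x →
      G x = 1 + (Real.exp (-x) - Real.exp (-(x * δ ^ 2))) / (x * (1 - δ ^ 2))) :
    (∀ x : ℝ, 0 ≤ x → 0 ≤ G x ∧ G x ≤ 1)
    ∧ MonotoneOn G (Set.Ioi (0 : ℝ))
    ∧ Tendsto G atTop (nhds 1) := by
  set c : ℝ := δ ^ 2 with hc
  have hc0 : 0 < c := by positivity
  have hc1 : c < 1 := by nlinarith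
  have h1c : 0 < 1 - c := by linarith
  refine ⟨?_, ?_, ?_⟩
  · rintro x hx
    rcases eq_or_lt_of_le hx with h | hxpos
    · simp [← h, hG0]
    have hd : 0 < x * (1 - c) := by positivity
    rw [hG x hxpos]
    constructor
    · have key : Real.exp (-(x * c)) - Real.exp (-x) ≤ x * (1 - c) := by
        have h1 : Real.exp (-(x*c)) ≤ 1 := by
          rw [Real.exp_le_one_iff]; nlinarith
        have h2 : (x*c - x) + 1 ≤ Real.exp (x*c - x) := Real.add_one_le_exp _
        have h3 : Real.exp (-(x*c)) * Real.exp (x*c - x) = Real.exp (-x) := by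
          rw [← Real.exp_add]; ring_nf
        nlinarith [Real.exp_pos (x*c - x), Real.exp_pos (-(x*c))]
      have h4 : (Real.exp (-(x*c)) - Real.exp (-x)) / (x*(1-c)) ≤ 1 := (div_le_one hd).2 key
      have h5 : (Real.exp (-x) - Real.exp (-(x*c))) / (x*(1-c))
          = -((Real.exp (-(x*c)) - Real.exp (-x)) / (x*(1-c))) := by ring
      rw [h5]; linarith
    · have hnum : Real.exp (-x) - Real.exp (-(x*c)) ≤ 0 := by
        have : Real.exp (-x) ≤ Real.exp (-(x*c)) := by
          apply Real.exp_le_exp.2; nlinarith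
        linarith
      have : (Real.exp (-x) - Real.exp (-(x*c))) / (x*(1-c)) ≤ 0 :=
        div_nonpos_iff.2 (Or.inr ⟨hnum, hd.le⟩)
      linarith
  · rintro x hx y hy hxy
    rw [Set.mem_Ioi] at hx hy
    rw [hG x hx, hG y hy]
    have key : (Real.exp (-(y * c)) - Real.exp (-y)) / y
        ≤ (Real.exp (-(x * c)) - Real.exp (-x)) / x := by
      rw [← intRep x c hx.ne', ← intRep y c hy.ne']
      apply intervalIntegral.integral_mono_on hc1.le
      · exact (Real.continuous_exp.comp (continuous_const.mul continuous_id).neg).intervalIntegrable _ _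
      · exact (Real.continuous_exp.comp (continuous_const.mul continuous_id).neg).intervalIntegrable _ _
      · intro t ht
        apply Real.exp_le_exp.2
        have ht0 : 0 ≤ t := hc0.le.trans ht.1
        nlinarith
    have ex : ∀ z : ℝ, z ≠ 0 → (Real.exp (-z) - Real.exp (-(z * c))) / (z * (1 - c))
        = -((Real.exp (-(z*c)) - Real.exp (-z)) / z) / (1-c) := by
      intro z hz
      field_simp
      ring
    rw [ex x hx.ne', ex y hy.ne']
    have h6 : -((Real.exp (-(x*c)) - Real.exp (-x)) / x)
        ≤ -((Real.exp (-(y*c)) - Real.exp (-y)) / y) := by linarith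
    exact add_le_add_right (div_le_div_of_nonneg_right h6 h1c.le) 1
  · have t1 : Tendsto (fun x : ℝ => Real.exp (-x)) atTop (nhds 0) :=
      Real.tendsto_exp_neg_atTop_nhds_zero
    have tm : Tendsto (fun x : ℝ => x * c) atTop atTop :=
      Tendsto.atTop_mul_const hc0 tendsto_id
    have t2 : Tendsto (fun x : ℝ => Real.exp (-(x * c))) atTop (nhds 0) := t1.comp tm
    have t3 : Tendsto (fun x : ℝ => (x * (1 - c))⁻¹) atTop (nhds 0) :=
      (Tendsto.atTop_mul_const h1c tendsto_id).inv_tendsto_atTop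
    have t4 : Tendsto (fun x : ℝ => 1 + (Real.exp (-x) - Real.exp (-(x * c))) / (x * (1 - c)))
        atTop (nhds 1) := by
      have := ((t1.sub t2).mul t3)
      simp only [div_eq_mul_inv]
      have h0 : ((0:ℝ) - 0) * 0 = 0 := by norm_num
      rw [h0] at this
      simpa using tendsto_const_nhds.add this
    apply t4.congr'
    filter_upwards [eventually_gt_atTop 0] with x hx
    exact (hG x hx).symm
end

section
/- In the stationary regime of the buffered scheduling chain, packet flow is conserved: the expected number of packets scheduled per slot equals 1 - θ_r, i.e., Σ_{p=0}^{M} π_p Σ_{q=0}^{min(p,B)} α^s_{p,q} (min(p,B) - q + 1) = 1 - Σ_{p=B}^{M-1} α_{p,p+1} π_p. -/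
/-- Packet flow conservation in the stationary regime: the
expected number of packets scheduled per slot equals `1 - θ_r`. -/
theorem packet_flow_conservation (B N M : ℕ) (hM : M = B + N) (hN : 0 < N)
    (Q : ℕ → ℕ → ℝ)
    (hnn : ∀ p q, p ≤ M → q ≤ M → 0 ≤ Q p q)
    (hstruct : ∀ p q, p ≤ M → q ≤ M → q ≠ p + 1 → min p B < q → Q p q = 0)
    (hlast : ∀ q, q ≤ M → min M B < q → Q M q = 0)
    (hrow : ∀ p, p ≤ M → ∑ q ∈ Finset.range (M + 1), Q p q = 1)
    (π : ℕ → ℝ)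
    (hπnn : ∀ p, p ≤ M → 0 ≤ π p)
    (hπsum : ∑ p ∈ Finset.range (M + 1), π p = 1)
    (hπstat : ∀ q, q ≤ M → ∑ p ∈ Finset.range (M + 1), π p * Q p q = π q) :
    ∑ p ∈ Finset.range (M + 1), π p *
        ∑ q ∈ Finset.range (min p B + 1), Q p q * ((min p B - q + 1 : ℕ) : ℝ)
      = 1 - ∑ p ∈ Finset.Ico B M, Q p (p + 1) * π p := by
  have hBM : B ≤ M := by omega
  -- extension lemma: a row sum over all of range (M+1) reduces to the truncated
  -- sum plus possibly the buffering/dropping term `q = p+1`.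
  have hext : ∀ p, p ≤ M → ∀ g : ℕ → ℝ,
      ∑ q ∈ Finset.range (M + 1), Q p q * g q
        = (∑ q ∈ Finset.range (min p B + 1), Q p q * g q)
          + (if p < M then Q p (p + 1) * g (p + 1) else 0) := by
    intro p hp g
    have hmp : min p B ≤ p := min_le_left p B
    have h1 : min p B + 1 ≤ M + 1 := by omega
    rw [← Finset.sum_range_add_sum_Ico _ h1]
    congr 1
    by_cases h : p < M
    · rw [if_pos h]
      apply Finset.sum_eq_single_of_mem (p + 1)
      · rw [Finset.mem_Ico]; omega
      · intro q hq hne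
        rw [Finset.mem_Ico] at hq
        rw [hstruct p q hp (by omega) hne (by omega), zero_mul]
    · rw [if_neg h]
      have hpM : p = M := le_antisymm hp (not_lt.mp h)
      apply Finset.sum_eq_zero
      intro q hq
      rw [Finset.mem_Ico] at hq
      subst hpM
      rw [hlast q (by omega) (by omega), zero_mul]
  -- weighted stationarity
  have hS : ∀ g : ℕ → ℝ,
      ∑ p ∈ Finset.range (M + 1), π p * ∑ q ∈ Finset.range (M + 1), Q p q * g q
        = ∑ q ∈ Finset.range (M + 1), π q * g q := by
    intro g
    calc ∑ p ∈ Finset.range (M + 1), π p * ∑ q ∈ Finset.range (M + 1), Q p q * g q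
        = ∑ p ∈ Finset.range (M + 1), ∑ q ∈ Finset.range (M + 1),
            π p * Q p q * g q := by
          refine Finset.sum_congr rfl fun p _ => ?_
          rw [Finset.mul_sum]
          exact Finset.sum_congr rfl fun q _ => by ring
      _ = ∑ q ∈ Finset.range (M + 1), ∑ p ∈ Finset.range (M + 1),
            π p * Q p q * g q := Finset.sum_comm
      _ = ∑ q ∈ Finset.range (M + 1), π q * g q := by
          refine Finset.sum_congr rfl fun q hq => ?_
          rw [Finset.mem_range] at hq
          rw [← Finset.sum_mul, hπstat q (by omega)]
  set R := Finset.range (M + 1) with hR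
  -- per-state identity
  have hA : ∀ p ∈ R,
      π p * ∑ q ∈ Finset.range (min p B + 1), Q p q * ((min p B - q + 1 : ℕ) : ℝ)
        = (π p * (((min p B : ℕ) : ℝ) + 1)
            - π p * (∑ q ∈ R, Q p q * ((min q B : ℕ) : ℝ)))
          + (if p < M then
              π p * Q p (p + 1) * (((min (p + 1) B : ℕ) : ℝ) - ((min p B : ℕ) : ℝ) - 1)
            else 0) := by
    intro p hpR
    rw [hR, Finset.mem_range] at hpR
    have hp : p ≤ M := by omega
    have hc : ∀ q ∈ Finset.range (min p B + 1),
        Q p q * ((min p B - q + 1 : ℕ) : ℝ)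
          = (((min p B : ℕ) : ℝ) + 1) * (Q p q * 1) - Q p q * (q : ℝ) := by
      intro q hq
      rw [Finset.mem_range] at hq
      have hq' : q ≤ min p B := by omega
      have : ((min p B - q + 1 : ℕ) : ℝ) = ((min p B : ℕ) : ℝ) + 1 - q := by
        rw [Nat.cast_add, Nat.cast_sub hq', Nat.cast_one]; ring
      rw [this]; ring
    rw [Finset.sum_congr rfl hc, Finset.sum_sub_distrib, ← Finset.mul_sum]
    -- truncated row sum via hext with g = 1
    have h1 : ∑ q ∈ Finset.range (min p B + 1), Q p q * 1
        = 1 - (if p < M then Q p (p + 1) * 1 else 0) := by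
      have := hext p hp (fun _ => 1)
      have hrow' : ∑ q ∈ Finset.range (M + 1), Q p q * 1 = 1 := by
        simpa using hrow p hp
      rw [hrow'] at this
      linarith [this]
    -- truncated weighted sum via hext with g q = min q B
    have h2 : ∑ q ∈ Finset.range (min p B + 1), Q p q * (q : ℝ)
        = (∑ q ∈ R, Q p q * ((min q B : ℕ) : ℝ))
          - (if p < M then Q p (p + 1) * ((min (p + 1) B : ℕ) : ℝ) else 0) := by
      have hq2 : ∀ q ∈ Finset.range (min p B + 1),
          Q p q * ((min q B : ℕ) : ℝ) = Q p q * (q : ℝ) := by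
        intro q hq
        rw [Finset.mem_range] at hq
        have : min q B = q := by
          have := min_le_right p B
          exact min_eq_left (by omega)
        rw [this]
      have := hext p hp (fun q => ((min q B : ℕ) : ℝ))
      rw [Finset.sum_congr rfl hq2] at this
      rw [hR]
      linarith [this]
    rw [h1, h2]
    by_cases h : p < M
    · simp only [if_pos h]; ring
    · simp only [if_neg h]; ring
  rw [Finset.sum_congr rfl hA, Finset.sum_add_distrib, Finset.sum_sub_distrib]
  have hS' : ∑ p ∈ R, π p * (∑ q ∈ R, Q p q * ((min q B : ℕ) : ℝ))
      = ∑ q ∈ R, π q * ((min q B : ℕ) : ℝ) := hS _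
  rw [hS']
  have hfirst : ∑ p ∈ R, π p * (((min p B : ℕ) : ℝ) + 1)
      - ∑ q ∈ R, π q * ((min q B : ℕ) : ℝ) = 1 := by
    rw [← Finset.sum_sub_distrib]
    have : ∀ p ∈ R, π p * (((min p B : ℕ) : ℝ) + 1) - π p * ((min p B : ℕ) : ℝ) = π p := by
      intro p _; push_cast; ring
    rw [Finset.sum_congr rfl this, hR, hπsum]
  have hsecond : ∑ p ∈ R, (if p < M then
        π p * Q p (p + 1) * (((min (p + 1) B : ℕ) : ℝ) - ((min p B : ℕ) : ℝ) - 1)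
      else 0) = -∑ p ∈ Finset.Ico B M, Q p (p + 1) * π p := by
    rw [hR, Finset.sum_range_succ, if_neg (lt_irrefl M), add_zero]
    have heq : ∀ p ∈ Finset.range M, (if p < M then
          π p * Q p (p + 1) * (((min (p + 1) B : ℕ) : ℝ) - ((min p B : ℕ) : ℝ) - 1)
        else 0)
          = π p * Q p (p + 1) * (((min (p + 1) B : ℕ) : ℝ) - ((min p B : ℕ) : ℝ) - 1) := by
      intro p hp
      rw [Finset.mem_range] at hp
      rw [if_pos hp]
    rw [Finset.sum_congr rfl heq, ← Finset.sum_range_add_sum_Ico _ hBM]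
    have hz : ∑ p ∈ Finset.range B,
        π p * Q p (p + 1) * (((min (p + 1) B : ℕ) : ℝ) - ((min p B : ℕ) : ℝ) - 1) = 0 := by
      apply Finset.sum_eq_zero
      intro p hp
      rw [Finset.mem_range] at hp
      have h1 : min (p + 1) B = p + 1 := min_eq_left (by omega)
      have h2 : min p B = p := min_eq_left (by omega)
      rw [h1, h2]
      push_cast
      ring
    rw [hz, zero_add]
    rw [← Finset.sum_neg_distrib]
    refine Finset.sum_congr rfl fun p hp => ?_
    rw [Finset.mem_Ico] at hp
    have h1 : min (p + 1) B = B := min_eq_right (by omega)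
    have h2 : min p B = B := min_eq_right (by omega)
    rw [h1, h2]
    ring
  rw [hsecond, hfirst]
  ring
end
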